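/- The image of the action of Q = Σ_{i,j} (-1)^{p(i)p(j)+p(i)+p(j)} E_{ij}⊗E_{-i,-j} on (ℂ^{N|N})^{⊗2} is one-dimensional, spanned by the vector Σ_i (-1)^{p(i)} e_i ⊗ e_{-i}. -/

import Mathlib

open Matrix BigOperators

/-- Index set `{±1, …, ±N}`: `inl k` is the positive index `k+1`, `inr k` the negative `-(k+1)`. -/
abbrev Idx (N : ℕ) := Fin N ⊕ Fin N

/-- Parity: `0` for positive indices, `1` for negative ones. -/
def par {N : ℕ} : Idx N → ℕ := Sum.elim (fun _ => 0) (fun _ => 1)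

/-- Negation `i ↦ -i` on the index set. -/
def nn {N : ℕ} : Idx N → Idx N := Sum.swap

/-- The super (Koszul-signed) tensor product `A ⊗ B` of two matrices, realized as an
operator on `(ℂ^{N|N})^{⊗2}`: on matrix-unit components the sign is
`(-1)^{deg(column of A) · deg B}`, i.e. `(X⊗Y)(x⊗y) = (-1)^{deg x · deg Y} Xx ⊗ Yy`. -/
def stp {N : ℕ} (A B : Matrix (Idx N) (Idx N) ℂ) :
    Matrix (Idx N × Idx N) (Idx N × Idx N) ℂ :=
  Matrix.of fun r c =>
    A r.1 c.1 * B r.2 c.2 * (-1 : ℂ) ^ (par c.1 * (par r.2 + par c.2))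

/-- `P = Σ_{i,j} (-1)^{p(j)} E_{ij} ⊗ E_{ji}` in the super tensor square of `End(ℂ^{N|N})`. -/
noncomputable def P2 (N : ℕ) : Matrix (Idx N × Idx N) (Idx N × Idx N) ℂ :=
  ∑ i : Idx N, ∑ j : Idx N,
    ((-1 : ℂ) ^ par j) • stp (Matrix.single i j 1) (Matrix.single j i 1)

/-- `Q = Σ_{i,j} (-1)^{p(i)p(j)+p(i)+p(j)} E_{ij} ⊗ E_{-i,-j}` in the super tensor square. -/
noncomputable def Q2 (N : ℕ) : Matrix (Idx N × Idx N) (Idx N × Idx N) ℂ :=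
  ∑ i : Idx N, ∑ j : Idx N,
    ((-1 : ℂ) ^ (par i * par j + par i + par j)) •
      stp (Matrix.single i j 1) (Matrix.single (nn i) (nn j) 1)

lemma Q2_entry (N : ℕ) (r c : Idx N × Idx N) :
    Q2 N r c = (if r.2 = nn r.1 ∧ c.2 = nn c.1 then (-1 : ℂ) ^ par r.1 else 0) := by
  obtain ⟨r1, r2⟩ := r; obtain ⟨c1, c2⟩ := c
  simp only [Q2, Matrix.sum_apply, Matrix.smul_apply, stp, Matrix.of_apply,
    Matrix.single, smul_eq_mul]
  rw [Finset.sum_eq_single r1 (fun i _ hi => Finset.sum_eq_zero fun j _ => by simp [hi])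
    (by simp)]
  rw [Finset.sum_eq_single c1 (fun j _ hj => by simp [hj]) (by simp)]
  by_cases h1 : r2 = nn r1 <;> by_cases h2 : c2 = nn c1
  · subst h1; subst h2
    rcases r1 with a | a <;> rcases c1 with b | b <;> simp [par, nn] <;> ring
  all_goals simp [h1, h2, eq_comm]

noncomputable def wvec (N : ℕ) : Idx N × Idx N → ℂ :=
  ∑ i : Idx N, ((-1 : ℂ) ^ par i) • (Pi.single (i, nn i) 1 : Idx N × Idx N → ℂ)

lemma wvec_apply (N : ℕ) (r : Idx N × Idx N) :
    wvec N r = (if r.2 = nn r.1 then (-1 : ℂ) ^ par r.1 else 0) := by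
  obtain ⟨r1, r2⟩ := r
  simp only [wvec, Finset.sum_apply, Pi.smul_apply, Pi.single_apply, smul_eq_mul,
    Prod.mk.injEq, ite_and, mul_ite, mul_one, mul_zero]
  rw [Finset.sum_eq_single r1 (fun i _ hi => by simp [Ne.symm hi]) (by simp)]
  by_cases h : r2 = nn r1 <;> simp [h, eq_comm]

lemma Q2_mulVec (N : ℕ) (v : Idx N × Idx N → ℂ) :
    (Q2 N).mulVec v = (∑ c : Idx N, v (c, nn c)) • wvec N := by
  funext r
  simp only [Matrix.mulVec, dotProduct, Q2_entry, Pi.smul_apply, smul_eq_mul,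
    wvec_apply, ite_and, ite_mul, zero_mul]
  rw [Fintype.sum_prod_type]
  by_cases h : r.2 = nn r.1
  · simp only [h, if_true]
    rw [Finset.sum_mul]
    refine Finset.sum_congr rfl fun c1 _ => ?_
    rw [Finset.sum_eq_single (nn c1) (fun c2 _ hc2 => by simp [hc2]) (by simp)]
    simp [mul_comm]
  · simp [h]

lemma wvec_ne_zero (N : ℕ) (hN : 0 < N) : wvec N ≠ 0 := by
  intro h
  have := congrFun h (Sum.inl ⟨0, hN⟩, nn (Sum.inl ⟨0, hN⟩))
  rw [wvec_apply] at this
  simp [par] at this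

/-- The image of the action of `Q` on `(ℂ^{N|N})^{⊗2}` is one-dimensional, spanned by
`Σ_i (-1)^{p(i)} e_i ⊗ e_{-i}`. -/
theorem stmt_7 (N : ℕ) (hN : 0 < N) :
    LinearMap.range ((Q2 N).mulVecLin) =
      Submodule.span ℂ
        {∑ i : Idx N, ((-1 : ℂ) ^ par i) • (Pi.single (i, nn i) 1 : Idx N × Idx N → ℂ)} ∧
    Module.finrank ℂ ↥(LinearMap.range ((Q2 N).mulVecLin)) = 1 := by
  have hspan : {∑ i : Idx N, ((-1 : ℂ) ^ par i) • (Pi.single (i, nn i) 1 : Idx N × Idx N → ℂ)}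
      = ({wvec N} : Set (Idx N × Idx N → ℂ)) := rfl
  have hrange : LinearMap.range ((Q2 N).mulVecLin) = Submodule.span ℂ {wvec N} := by
    apply le_antisymm
    · rintro x ⟨v, rfl⟩
      rw [Matrix.mulVecLin_apply, Q2_mulVec]
      exact Submodule.smul_mem _ _ (Submodule.mem_span_singleton_self _)
    · rw [Submodule.span_le, Set.singleton_subset_iff]
      refine ⟨Pi.single (Sum.inl ⟨0, hN⟩, nn (Sum.inl ⟨0, hN⟩)) 1, ?_⟩
      rw [Matrix.mulVecLin_apply, Q2_mulVec]
      rw [Finset.sum_eq_single (Sum.inl ⟨0, hN⟩ : Idx N)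
        (fun c _ hc => by simp [Pi.single_apply, Prod.ext_iff, hc]) (by simp)]
      simp
  rw [hspan]
  refine ⟨hrange, ?_⟩
  rw [hrange, finrank_span_singleton (wvec_ne_zero N hN)]
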